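/- There exists an absolute constant C > 0 such that for all real β with 0 < β ≤ 1, all real Δ ≥ 1, and all complex z = x + iy, one has |m⁻_{β,Δ}(z)| ≤ C · β · Δ² · e^{2πΔ|y|} / (1 + Δ|z|). -/

import Mathlib

open scoped Real

noncomputable def mMinusC (β Δ : ℝ) (z : ℂ) : ℂ :=
  ((β : ℂ) / ((β : ℂ) ^ 2 + z ^ 2)) *
    (((Real.exp (2 * π * β * Δ) : ℂ) + (Real.exp (-(2 * π * β * Δ)) : ℂ)
        - 2 * Complex.cos (2 * π * Δ * z)) /
      ((Real.exp (π * β * Δ) : ℂ) + (Real.exp (-(π * β * Δ)) : ℂ)) ^ 2)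

/-!
The numerator factorises as `4 sin(πΔ(z + iβ)) sin(πΔ(z - iβ))` and `β² + z² = (z + iβ)(z - iβ)`,
so `m⁻` is `4β / (2 cosh πβΔ)²` times two quotients `sin(aw)/w` with `a = πΔ`. Since
`‖sin u‖ ≤ min(1, ‖u‖) e^{|Im u|}`, each quotient is at most `2a e^{a|Im w|} / (1 + a‖w‖)`, and one of
`‖z ± iβ‖` is at least `‖z‖`. Finally `|y + β| + |y - β| ≤ 2|y| + 2β`, and the resulting factor
`e^{2πβΔ}` is absorbed by `(2 cosh πβΔ)²`.
-/

namespace Complex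

lemma norm_exp_mul_I_le (u : ℂ) : ‖exp (u * I)‖ ≤ Real.exp |u.im| := by
  rw [norm_exp]
  exact Real.exp_le_exp.2 (by simpa using neg_le_abs u.im)

lemma norm_sin_le_exp_abs_im (u : ℂ) : ‖sin u‖ ≤ Real.exp |u.im| := by
  have h₁ := norm_exp_mul_I_le (-u)
  have h₂ := norm_exp_mul_I_le u
  rw [neg_im, abs_neg] at h₁
  have h : ‖2 * sin u‖ ≤ 2 * Real.exp |u.im| := by
    rw [two_sin, norm_mul, norm_I, mul_one]
    linarith [norm_sub_le (exp (-u * I)) (exp (u * I))]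
  rwa [norm_mul, Complex.norm_two, mul_le_mul_iff_right₀ two_pos] at h

lemma norm_cos_le_exp_abs_im (u : ℂ) : ‖cos u‖ ≤ Real.exp |u.im| := by
  have h₁ := norm_exp_mul_I_le (-u)
  have h₂ := norm_exp_mul_I_le u
  rw [neg_im, abs_neg] at h₁
  have h : ‖2 * cos u‖ ≤ 2 * Real.exp |u.im| := by
    rw [two_cos]
    linarith [norm_add_le (exp (u * I)) (exp (-u * I))]
  rwa [norm_mul, Complex.norm_two, mul_le_mul_iff_right₀ two_pos] at h

lemma norm_sin_le_norm_mul_exp_abs_im (u : ℂ) : ‖sin u‖ ≤ ‖u‖ * Real.exp |u.im| := by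
  have hS : Convex ℝ (im ⁻¹' Set.Icc (-|u.im|) |u.im|) := (convex_Icc _ _).linear_preimage imLm
  have h := hS.norm_image_sub_le_of_norm_deriv_le (fun v _ => differentiableAt_sin)
    (fun v hv => by
      rw [deriv_sin]
      exact (norm_cos_le_exp_abs_im v).trans (Real.exp_le_exp.2 (abs_le.2 hv)))
    (x := 0) (y := u) (by simp) (abs_le.1 le_rfl)
  simpa [mul_comm] using h

lemma norm_sin_mul_one_add_norm_le (u : ℂ) :
    ‖sin u‖ * (1 + ‖u‖) ≤ 2 * ‖u‖ * Real.exp |u.im| := by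
  have hE := Real.exp_pos |u.im|
  rcases le_total ‖u‖ 1 with hu | hu
  · have h := norm_sin_le_norm_mul_exp_abs_im u
    nlinarith [mul_le_mul_of_nonneg_right h (by positivity : (0 : ℝ) ≤ 1 + ‖u‖),
      mul_nonneg (mul_nonneg (norm_nonneg u) hE.le) (sub_nonneg.2 hu)]
  · have h := norm_sin_le_exp_abs_im u
    nlinarith [mul_le_mul_of_nonneg_right h (by positivity : (0 : ℝ) ≤ 1 + ‖u‖)]

lemma norm_sin_mul_div_mul_le {a : ℝ} (ha : 0 ≤ a) (w : ℂ) :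
    ‖sin (a * w) / w‖ * (1 + a * ‖w‖) ≤ 2 * a * Real.exp (a * |w.im|) := by
  rcases eq_or_ne w 0 with rfl | hw
  · simp only [div_zero, norm_zero, zero_mul]
    positivity
  have h := norm_sin_mul_one_add_norm_le (a * w)
  rw [norm_mul, norm_real, Real.norm_of_nonneg ha, im_ofReal_mul, abs_mul,
    abs_of_nonneg ha] at h
  rw [norm_div, div_mul_eq_mul_div, div_le_iff₀ (norm_pos_iff.2 hw)]
  linarith

lemma norm_sin_div_mul_norm_sin_div_le {a : ℝ} (ha : 0 ≤ a) (w₁ w₂ : ℂ) :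
    ‖sin (a * w₁) / w₁‖ * ‖sin (a * w₂) / w₂‖ * (1 + a * ‖(w₁ + w₂) / 2‖) ≤
      (2 * a) ^ 2 * Real.exp (a * |w₁.im|) * Real.exp (a * |w₂.im|) := by
  wlog h : ‖w₂‖ ≤ ‖w₁‖ generalizing w₁ w₂
  · have := this w₂ w₁ (le_of_not_ge h)
    rw [add_comm w₂] at this
    linarith
  have hmid : ‖(w₁ + w₂) / 2‖ ≤ ‖w₁‖ := by
    rw [norm_div, Complex.norm_two]
    linarith [norm_add_le w₁ w₂]
  have h₁ := norm_sin_mul_div_mul_le ha w₁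
  have h₂ : ‖sin (a * w₂) / w₂‖ ≤ 2 * a * Real.exp (a * |w₂.im|) :=
    le_trans (le_mul_of_one_le_right (norm_nonneg _) (le_add_of_nonneg_right (by positivity)))
      (norm_sin_mul_div_mul_le ha w₂)
  calc ‖sin (a * w₁) / w₁‖ * ‖sin (a * w₂) / w₂‖ * (1 + a * ‖(w₁ + w₂) / 2‖)
      ≤ ‖sin (a * w₁) / w₁‖ * (1 + a * ‖w₁‖) * ‖sin (a * w₂) / w₂‖ := by
        rw [mul_right_comm]; gcongr
    _ ≤ 2 * a * Real.exp (a * |w₁.im|) * (2 * a * Real.exp (a * |w₂.im|)) := by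
        gcongr
    _ = _ := by ring

lemma exp_add_exp_neg_sub_two_cos (a ζ : ℂ) :
    exp (2 * a) + exp (-(2 * a)) - 2 * cos (2 * ζ) = 4 * sin (ζ + a * I) * sin (ζ - a * I) := by
  rw [← two_cosh, ← cos_mul_I, ← mul_sub, cos_sub_cos,
    show (2 * a * I + 2 * ζ) / 2 = ζ + a * I by ring,
    show (2 * a * I - 2 * ζ) / 2 = -(ζ - a * I) by ring, sin_neg]
  ring

end Complex

open Complex

lemma mMinusC_eq (β Δ : ℝ) (z : ℂ) :
    mMinusC β Δ z = 4 * β * (sin ((π * Δ : ℝ) * (z + β * I)) / (z + β * I)) *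
      (sin ((π * Δ : ℝ) * (z - β * I)) / (z - β * I)) /
        ((Real.exp (π * β * Δ) + Real.exp (-(π * β * Δ)) : ℝ) : ℂ) ^ 2 := by
  have hnum : (Real.exp (2 * π * β * Δ) : ℂ) + (Real.exp (-(2 * π * β * Δ)) : ℂ)
      - 2 * cos (2 * π * Δ * z) =
        4 * sin ((π * Δ : ℝ) * (z + β * I)) * sin ((π * Δ : ℝ) * (z - β * I)) := by
    convert exp_add_exp_neg_sub_two_cos (π * β * Δ) (π * Δ * z) using 2 <;> push_cast <;> ring_nf
  have hden : (β : ℂ) ^ 2 + z ^ 2 = (z + β * I) * (z - β * I) := by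
    linear_combination (β : ℂ) ^ 2 * I_sq
  rw [mMinusC, hnum, hden]
  push_cast
  generalize z + β * I = w₁
  generalize z - β * I = w₂
  ring

lemma exp_mul_abs_add_mul_exp_mul_abs_sub_le {c : ℝ} (hc : 0 ≤ c) (y b : ℝ) :
    Real.exp (c * |y + b|) * Real.exp (c * |y - b|) ≤
      Real.exp (2 * c * |y|) * (Real.exp (c * b) + Real.exp (-(c * b))) ^ 2 := by
  have hb : Real.exp (c * |b|) ≤ Real.exp (c * b) + Real.exp (-(c * b)) := by
    rcases abs_cases b with ⟨hb, -⟩ | ⟨hb, -⟩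
    · rw [hb]; linarith [Real.exp_pos (-(c * b))]
    · rw [hb, mul_neg]; linarith [Real.exp_pos (c * b)]
  calc Real.exp (c * |y + b|) * Real.exp (c * |y - b|)
      ≤ Real.exp (2 * c * |y|) * Real.exp (c * |b|) ^ 2 := by
        simp only [sq, ← Real.exp_add]
        gcongr Real.exp ?_
        nlinarith [mul_le_mul_of_nonneg_left (add_le_add (abs_add_le y b) (abs_sub y b)) hc]
    _ ≤ _ := by gcongr

lemma norm_mMinusC {β : ℝ} (hβ : 0 ≤ β) (Δ : ℝ) (z : ℂ) :
    ‖mMinusC β Δ z‖ = 4 * β * ‖sin ((π * Δ : ℝ) * (z + β * I)) / (z + β * I)‖ *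
      ‖sin ((π * Δ : ℝ) * (z - β * I)) / (z - β * I)‖ /
        (Real.exp (π * β * Δ) + Real.exp (-(π * β * Δ))) ^ 2 := by
  rw [mMinusC_eq, norm_div, norm_mul, norm_mul, norm_mul, norm_pow, norm_real, norm_real,
    Real.norm_of_nonneg hβ, Real.norm_of_nonneg (by positivity), norm_ofNat]

theorem complex_growth_bound_minorant :
    ∃ C : ℝ, 0 < C ∧ ∀ β Δ : ℝ, ∀ z : ℂ, 0 < β → β ≤ 1 → 1 ≤ Δ →
      ‖mMinusC β Δ z‖ ≤
        C * β * Δ ^ 2 * Real.exp (2 * π * Δ * |z.im|) / (1 + Δ * ‖z‖) := by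
  refine ⟨16 * π ^ 2, by positivity, fun β Δ z hβ _ hΔ => ?_⟩
  have hsinc := norm_sin_div_mul_norm_sin_div_le (a := π * Δ) (by positivity)
    (z + β * I) (z - β * I)
  simp only [show (z + β * I + (z - β * I)) / 2 = z by ring, add_im, sub_im, mul_im, ofReal_re,
    ofReal_im, I_re, I_im, mul_zero, mul_one, add_zero] at hsinc
  have hexp := exp_mul_abs_add_mul_exp_mul_abs_sub_le (c := π * Δ) (by positivity) z.im β
  rw [show π * Δ * β = π * β * Δ by ring, show 2 * (π * Δ) = 2 * π * Δ by ring] at hexp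
  have hΔπ : Δ * ‖z‖ ≤ π * Δ * ‖z‖ := by
    rw [mul_assoc]
    exact le_mul_of_one_le_left (by positivity) (by linarith [Real.pi_gt_three])
  rw [norm_mMinusC hβ.le, div_le_div_iff₀ (by positivity) (by positivity)]
  set s₁ := ‖sin ((π * Δ : ℝ) * (z + β * I)) / (z + β * I)‖
  set s₂ := ‖sin ((π * Δ : ℝ) * (z - β * I)) / (z - β * I)‖
  calc 4 * β * s₁ * s₂ * (1 + Δ * ‖z‖)
      ≤ 4 * β * (s₁ * s₂ * (1 + π * Δ * ‖z‖)) := by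
        rw [mul_assoc (4 * β), mul_assoc (4 * β)]
        gcongr
    _ ≤ 4 * β * ((2 * (π * Δ)) ^ 2 * Real.exp (π * Δ * |z.im + β|) *
          Real.exp (π * Δ * |z.im - β|)) := by gcongr
    _ ≤ 4 * β * ((2 * (π * Δ)) ^ 2 * (Real.exp (2 * π * Δ * |z.im|) *
          (Real.exp (π * β * Δ) + Real.exp (-(π * β * Δ))) ^ 2)) := by
        rw [mul_assoc ((2 * (π * Δ)) ^ 2)]
        gcongr
    _ = _ := by ring
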